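/- arXiv:quant-ph/0203104 — 4 statements merged into one kernel-verified Lean document; each statement's English description precedes it below -/
import Mathlib

section
/- For a system with H₀' = Σ_{m=1}^{ℓ} ε_m h_m and H₁ = Σ_{m=1}^{ℓ} δ_m y_m in the so(2ℓ+1) basis, the double commutator satisfies [[iH₀', iH₁], iH₀'] = Σ_{m=1}^{ℓ} δ_m ω_{m-1}² y_m, where ω₀ = ε₁ and ω_m = ε_{m+1} - ε_m for 1 ≤ m < ℓ. -/
/-!
`iH₀'` is diagonal, with entries `i·(0, ε₁, …, ε_ℓ, -ε₁, …, -ε_ℓ)`. For a diagonal matrix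
`D = diag c`, the map `A ↦ ⁅⁅D, A⁆, D⁆` multiplies the entry `A j k` by `-(c j - c k)²`, so every
`y_m` is an eigenvector: both of its off-diagonal pairs of entries sit at positions whose weight
difference is `±ω_{m-1}`, giving the eigenvalue `ω_{m-1}²`. Linearity in `iH₁` finishes.
-/

open Matrix

/-- The `N×N` standard matrix unit `e_{a,b}` (1-based indices). -/
noncomputable def e (N a b : ℕ) : Matrix (Fin N) (Fin N) ℂ :=
  Matrix.of fun i j => if (i : ℕ) + 1 = a ∧ (j : ℕ) + 1 = b then 1 else 0

/-- `x_{a,b} = e_{a,b} - e_{b,a}`. -/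
noncomputable def X (N a b : ℕ) : Matrix (Fin N) (Fin N) ℂ := e N a b - e N b a

/-- `y_{a,b} = i (e_{a,b} + e_{b,a})`. -/
noncomputable def Y (N a b : ℕ) : Matrix (Fin N) (Fin N) ℂ :=
  Complex.I • (e N a b + e N b a)

/-- Cartan generator of `so(2ℓ+1)`: `h_m = i (e_{m+1,m+1} - e_{m+ℓ+1,m+ℓ+1})`. -/
noncomputable def hB (l m : ℕ) : Matrix (Fin (2 * l + 1)) (Fin (2 * l + 1)) ℂ :=
  Complex.I • (e (2 * l + 1) (m + 1) (m + 1) - e (2 * l + 1) (m + l + 1) (m + l + 1))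

/-- Generators `x_m` of `so(2ℓ+1)`: `x₁ = x_{ε₁}`, `x_{m+1} = x_{ε_m - ε_{m+1}}`. -/
noncomputable def xB (l m : ℕ) : Matrix (Fin (2 * l + 1)) (Fin (2 * l + 1)) ℂ :=
  if m = 1 then X (2 * l + 1) 1 2 - X (2 * l + 1) (l + 2) 1
  else X (2 * l + 1) (m + 1) m - X (2 * l + 1) (m + l) (m + l + 1)

/-- Generators `y_m` of `so(2ℓ+1)`: `y₁ = y_{ε₁}`, `y_{m+1} = y_{ε_m - ε_{m+1}}`. -/
noncomputable def yB (l m : ℕ) : Matrix (Fin (2 * l + 1)) (Fin (2 * l + 1)) ℂ :=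
  if m = 1 then Y (2 * l + 1) 1 2 - Y (2 * l + 1) (l + 2) 1
  else Y (2 * l + 1) (m + 1) m - Y (2 * l + 1) (m + l) (m + l + 1)

/-- `ω₀ = ε₁`, `ω_m = ε_{m+1} - ε_m` for `m ≥ 1`. -/
noncomputable def w (ε : ℕ → ℝ) (m : ℕ) : ℝ :=
  if m = 0 then ε 1 else ε (m + 1) - ε m

section

-- The bracket on a ring is the commutator, but its `LieRing` structure is not a global instance.
attribute [local instance] LieRing.ofAssociativeRing

theorem lie_lie_sum_smul {R A ι : Type*} [CommRing R] [Ring A] [Algebra R A] (x : A)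
    (s : Finset ι) (c : ι → R) (g : ι → A) :
    ⁅⁅x, ∑ i ∈ s, c i • g i⁆, x⁆ = ∑ i ∈ s, c i • ⁅⁅x, g i⁆, x⁆ := by
  simp only [lie_sum, sum_lie]
  exact Finset.sum_congr rfl fun i _ => by rw [lie_smul (c i) x (g i), smul_lie]

theorem lie_lie_sub {A : Type*} [Ring A] (x a b : A) :
    ⁅⁅x, a - b⁆, x⁆ = ⁅⁅x, a⁆, x⁆ - ⁅⁅x, b⁆, x⁆ := by
  rw [lie_sub, sub_lie]

end

theorem Matrix.lie_lie_diagonal_apply {n R : Type*} [Fintype n] [DecidableEq n] [CommRing R]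
    (c : n → R) (A : Matrix n n R) (i j : n) :
    ⁅⁅diagonal c, A⁆, diagonal c⁆ i j = -(c i - c j) ^ 2 * A i j := by
  simp only [Ring.lie_def, sub_apply, sub_mul, mul_sub, diagonal_mul, mul_diagonal]
  ring

theorem Y_apply_eq_zero {N a b : ℕ} {i j : Fin N}
    (h : ¬((i : ℕ) + 1 = a ∧ (j : ℕ) + 1 = b ∨ (i : ℕ) + 1 = b ∧ (j : ℕ) + 1 = a)) :
    Y N a b i j = 0 := by
  simp only [Y, e, Matrix.smul_apply, Matrix.add_apply, of_apply]
  rw [if_neg (by tauto), if_neg (by tauto), add_zero, smul_zero]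

theorem lie_lie_diagonal_Y (N a b : ℕ) (d : ℕ → ℝ) :
    ⁅⁅diagonal (fun i : Fin N => Complex.I * d i), Y N a b⁆,
      diagonal (fun i : Fin N => Complex.I * d i)⁆ = (d (a - 1) - d (b - 1)) ^ 2 • Y N a b := by
  ext i j
  rw [Matrix.lie_lie_diagonal_apply, Matrix.smul_apply, Complex.real_smul]
  have hsq : -(Complex.I * d i - Complex.I * d j) ^ 2 = ((d i - d j) ^ 2 : ℝ) := by
    push_cast
    linear_combination (-((d i : ℂ) - d j) ^ 2) * Complex.I_sq
  by_cases hij : (i : ℕ) + 1 = a ∧ (j : ℕ) + 1 = b ∨ (i : ℕ) + 1 = b ∧ (j : ℕ) + 1 = a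
  · rw [hsq]
    rcases hij with ⟨rfl, rfl⟩ | ⟨rfl, rfl⟩
    · rw [Nat.add_sub_cancel, Nat.add_sub_cancel]
    · rw [Nat.add_sub_cancel, Nat.add_sub_cancel, sub_sq_comm]
  · rw [Y_apply_eq_zero hij, mul_zero, mul_zero]

theorem lie_lie_diagonal_Y_sub_Y (N : ℕ) (d : ℕ → ℝ) {a b a' b' : ℕ} {ω : ℝ}
    (h : (d (a - 1) - d (b - 1)) ^ 2 = ω) (h' : (d (a' - 1) - d (b' - 1)) ^ 2 = ω) :
    ⁅⁅diagonal (fun i : Fin N => Complex.I * d i), Y N a b - Y N a' b'⁆,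
      diagonal (fun i : Fin N => Complex.I * d i)⁆ = ω • (Y N a b - Y N a' b') := by
  rw [lie_lie_sub, lie_lie_diagonal_Y, lie_lie_diagonal_Y, h, h', smul_sub]

def cartanWeight (l : ℕ) (ε : ℕ → ℝ) (k : ℕ) : ℝ :=
  if k = 0 then 0 else if k ≤ l then ε k else -ε (k - l)

section cartanWeight

variable {l : ℕ} (ε : ℕ → ℝ)

theorem cartanWeight_zero : cartanWeight l ε 0 = 0 := if_pos rfl

theorem cartanWeight_of_le {k : ℕ} (hk : 1 ≤ k) (hkl : k ≤ l) : cartanWeight l ε k = ε k := by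
  rw [cartanWeight, if_neg (by omega), if_pos hkl]

theorem cartanWeight_add {k : ℕ} (hk : 1 ≤ k) : cartanWeight l ε (k + l) = -ε k := by
  rw [cartanWeight, if_neg (by omega), if_neg (by omega), Nat.add_sub_cancel]

end cartanWeight

theorem hB_eq_diagonal (l m : ℕ) :
    hB l m = diagonal fun i : Fin (2 * l + 1) => Complex.I *
      ((if (i : ℕ) = m then 1 else 0) - if (i : ℕ) = m + l then 1 else 0) := by
  ext i j
  by_cases hij : i = j
  · subst hij; simp [hB, e]
  · have hij' : (i : ℕ) ≠ j := Fin.val_ne_of_ne hij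
    simp only [hB, e, Matrix.smul_apply, Matrix.sub_apply, of_apply, diagonal_apply_ne _ hij]
    rw [if_neg (by omega), if_neg (by omega), sub_zero, smul_zero]

theorem sum_smul_indicator_eq_cartanWeight (l : ℕ) (ε : ℕ → ℝ) {k : ℕ} (hk : k ≤ 2 * l) :
    ∑ m ∈ Finset.Icc 1 l, ε m * ((if k = m then 1 else 0) - if k = m + l then 1 else 0) =
      cartanWeight l ε k := by
  simp only [mul_sub, Finset.sum_sub_distrib, mul_ite, mul_one, mul_zero, Finset.sum_ite_eq,
    Finset.mem_Icc, cartanWeight]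
  rcases le_or_gt k l with hkl | hlk
  · rw [Finset.sum_eq_zero fun m hm => if_neg (by simp at hm; omega)]
    by_cases hk0 : k = 0 <;> simp [hk0, hkl]
  · rw [Finset.sum_eq_single_of_mem (k - l) (Finset.mem_Icc.2 ⟨by omega, by omega⟩)
      fun m _ hm => if_neg (by omega)]
    simp [Nat.sub_add_cancel hlk.le, hlk.not_ge, show k ≠ 0 by omega]

theorem sum_smul_hB_eq_diagonal (l : ℕ) (ε : ℕ → ℝ) :
    ∑ m ∈ Finset.Icc 1 l, ε m • hB l m =
      diagonal fun i : Fin (2 * l + 1) => Complex.I * cartanWeight l ε i := by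
  ext i j
  rw [Matrix.sum_apply, diagonal_apply]
  split_ifs with hij
  · subst hij
    simp only [Matrix.smul_apply, hB_eq_diagonal, diagonal_apply_eq, Complex.real_smul]
    rw [← sum_smul_indicator_eq_cartanWeight l ε (by omega), Complex.ofReal_sum, Finset.mul_sum]
    refine Finset.sum_congr rfl fun m _ => ?_
    split_ifs <;> push_cast <;> ring
  · simp [hB_eq_diagonal, diagonal_apply_ne _ hij]

theorem lie_lie_cartan_yB {l m : ℕ} (ε : ℕ → ℝ) (hm : 1 ≤ m) (hml : m ≤ l) :
    ⁅⁅diagonal (fun i : Fin (2 * l + 1) => Complex.I * cartanWeight l ε i), yB l m⁆,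
      diagonal (fun i : Fin (2 * l + 1) => Complex.I * cartanWeight l ε i)⁆ =
      w ε (m - 1) ^ 2 • yB l m := by
  unfold yB
  split_ifs with hm1
  · subst hm1
    apply lie_lie_diagonal_Y_sub_Y
    · simp [cartanWeight_zero, cartanWeight_of_le ε le_rfl hml, w]
    · rw [show l + 2 - 1 = 1 + l by omega]
      simp [cartanWeight_zero, cartanWeight_add ε le_rfl, w]
  · have hw : w ε (m - 1) = ε m - ε (m - 1) := by
      rw [w, if_neg (by omega), Nat.sub_add_cancel hm]
    apply lie_lie_diagonal_Y_sub_Y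
    · rw [Nat.add_sub_cancel, cartanWeight_of_le ε hm hml,
        cartanWeight_of_le ε (by omega) (by omega), hw]
    · rw [Nat.add_sub_cancel, show m + l - 1 = m - 1 + l by omega, cartanWeight_add ε hm,
        cartanWeight_add ε (by omega), hw]
      ring

/-- for `iH₀' = Σ ε_m h_m` and `iH₁ = Σ δ_m y_m` in the
`so(2ℓ+1)` basis, `[[iH₀', iH₁], iH₀'] = Σ_{m=1}^ℓ δ_m ω_{m-1}² y_m`. -/
theorem double_commutator_so (l : ℕ) (ε δ : ℕ → ℝ)
    (H0 H1 : Matrix (Fin (2 * l + 1)) (Fin (2 * l + 1)) ℂ)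
    (hH0 : H0 = ∑ m ∈ Finset.Icc 1 l, ε m • hB l m)
    (hH1 : H1 = ∑ m ∈ Finset.Icc 1 l, δ m • yB l m) :
    ⁅⁅H0, H1⁆, H0⁆ = ∑ m ∈ Finset.Icc 1 l, (δ m * (w ε (m - 1)) ^ 2) • yB l m := by
  rw [hH0, hH1, sum_smul_hB_eq_diagonal, lie_lie_sum_smul]
  refine Finset.sum_congr rfl fun m hm => ?_
  rw [Finset.mem_Icc] at hm
  rw [lie_lie_cartan_yB ε hm.1 hm.2, smul_smul]
end

section
/- Let ℓ ≥ 1 and consider the system with N = 2ℓ+1 equally spaced energy levels and uniform dipole moments: iH₀' = ε Σ_{m=1}^{ℓ} m·h_m (ε ≠ 0) and iH₁ = δ Σ_{m=1}^{ℓ} y_m (δ ≠ 0) in the so(2ℓ+1) basis. Then the Lie algebra generated by iH₀' and iH₁ contains all the generators x_m, y_m, h_m for 1 ≤ m ≤ ℓ. -/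
open Matrix

attribute [local instance 100] LieRing.ofAssociativeRing

/-!
Label the levels by sites `s ∈ {-ℓ, …, ℓ}`. Then `Σ m h_m` is `i` times the diagonal matrix of
the sites, and `x_m = ±(P_m - P_mᵀ)`, `y_m = i (P_m + P_mᵀ)` for the root vector `P_m` joining
the neighbouring sites `m ~ m - 1` and `1 - m ~ -m`. Each `P_k` is a weight vector of every
`h_m`, of weight `i (δ_{k,m} - δ_{k,m+1})`, so `[Σ m h_m, P_k] = i P_k`; this turns `x_m` into
`y_m`, and `iH₁ / δ = i (A + Aᵀ)`, where `A = Σ P_m`, into `-(A - Aᵀ)`. Next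
`[i (A + Aᵀ), A - Aᵀ] = -2i [A, Aᵀ] = -2 h_ℓ`, since `[P_j, P_kᵀ] = δ_{jk} (h_k - h_{k-1}) / i`
telescopes. A downward induction on `m` finishes (signs of `x_1` aside):
`[h_m, iH₁ / δ] = x_{m+1} - x_m` gives `x_m`, then `y_m = [Σ k h_k, x_m]`, and
`[y_m, x_m] = -2 (h_m - h_{m-1})` gives `h_{m-1}`.
-/
lemma e_mul_e (N a b c d : ℕ) :
    e N a b * e N c d = if b = c ∧ 1 ≤ b ∧ b ≤ N then e N a d else 0 := by
  ext i j
  rw [Matrix.mul_apply]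
  split_ifs with h
  · obtain ⟨rfl, hb1, hbN⟩ := h
    rw [Finset.sum_eq_single (⟨b - 1, by omega⟩ : Fin N)]
    · simp only [e, of_apply, Nat.sub_add_cancel hb1, and_true, true_and, mul_ite, ite_mul,
        one_mul, mul_zero, zero_mul]
      split_ifs <;> simp_all
    · intro k _ hk
      have : (k : ℕ) + 1 ≠ b := fun hkb => hk (Fin.ext (by simp; omega))
      simp [e, this]
    · simp
  · refine Finset.sum_eq_zero fun k _ => ?_
    have := k.isLt
    simp only [e, of_apply, mul_ite, ite_mul, one_mul, mul_zero, zero_mul]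
    split_ifs <;> first | rfl | omega

lemma e_transpose (N a b : ℕ) : (e N a b)ᵀ = e N b a := by
  ext i j
  simp [e, and_comm]

section SkewSymmetricParts

variable {n : Type*} [Fintype n] [DecidableEq n]

/-- `x_{a,b} = xPart e_{a,b}` and `y_{a,b} = yPart e_{a,b}`. -/
def xPart (B : Matrix n n ℂ) : Matrix n n ℂ := B - Bᵀ

noncomputable def yPart (B : Matrix n n ℂ) : Matrix n n ℂ := Complex.I • (B + Bᵀ)

lemma lie_transpose_of_transpose_eq {H : Matrix n n ℂ} (hH : Hᵀ = H) (B : Matrix n n ℂ) :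
    ⁅H, Bᵀ⁆ = -⁅H, B⁆ᵀ := by
  simp only [Ring.lie_def, transpose_sub, transpose_mul, hH, neg_sub]

variable {H B : Matrix n n ℂ} {c : ℝ}

lemma lie_xPart_of_lie_eq (hH : Hᵀ = H) (h : ⁅H, B⁆ = c • Complex.I • B) :
    ⁅H, xPart B⁆ = c • yPart B := by
  rw [xPart, yPart, lie_sub, lie_transpose_of_transpose_eq hH, h, transpose_smul,
    transpose_smul]
  module

lemma lie_yPart_of_lie_eq (hH : Hᵀ = H) (h : ⁅H, B⁆ = c • Complex.I • B) :
    ⁅H, yPart B⁆ = -(c • xPart B) := by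
  rw [xPart, yPart, lie_smul, lie_add, lie_transpose_of_transpose_eq hH, h, transpose_smul,
    transpose_smul]
  simp only [smul_add, smul_neg, smul_comm Complex.I c, smul_smul, Complex.I_mul_I]
  module

lemma lie_yPart_xPart (B : Matrix n n ℂ) :
    ⁅yPart B, xPart B⁆ = (-2 : ℝ) • Complex.I • ⁅B, Bᵀ⁆ := by
  rw [xPart, yPart, smul_lie, add_lie, lie_sub, lie_sub, lie_self, lie_self,
    ← lie_skew Bᵀ B]
  module

end SkewSymmetricParts

section Sites

variable {l : ℕ}

/-- The basis (1-based) lists the sites in the order `0, 1, …, ℓ, -1, …, -ℓ`. -/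
def siteIndex (l : ℕ) (s : ℤ) : ℕ :=
  if 0 ≤ s then s.toNat + 1 else (-s).toNat + l + 1

noncomputable def siteUnit (l : ℕ) (s t : ℤ) : Matrix (Fin (2 * l + 1)) (Fin (2 * l + 1)) ℂ :=
  e (2 * l + 1) (siteIndex l s) (siteIndex l t)

lemma siteUnit_mul_siteUnit {s t t' u : ℤ} (ht : t.natAbs ≤ l) (ht' : t'.natAbs ≤ l) :
    siteUnit l s t * siteUnit l t' u = if t = t' then siteUnit l s u else 0 := by
  rw [siteUnit, siteUnit, e_mul_e]
  unfold siteIndex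
  -- `siteIndex l` is injective on `{-ℓ, …, ℓ}`, with values in `[1, 2ℓ + 1]`
  congr 1
  apply propext
  split_ifs <;> omega

lemma siteUnit_transpose (s t : ℤ) : (siteUnit l s t)ᵀ = siteUnit l t s :=
  e_transpose _ _ _

noncomputable def cartanUnit (l m : ℕ) : Matrix (Fin (2 * l + 1)) (Fin (2 * l + 1)) ℂ :=
  siteUnit l m m - siteUnit l (-m) (-m)

noncomputable def rootVector (l k : ℕ) : Matrix (Fin (2 * l + 1)) (Fin (2 * l + 1)) ℂ :=
  siteUnit l k (k - 1) - siteUnit l (1 - k) (-k)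

lemma cartanUnit_zero : cartanUnit l 0 = 0 := by
  simp [cartanUnit]

def weight (m k : ℕ) : ℝ := (if k = m then 1 else 0) - (if k = m + 1 then 1 else 0)

lemma lie_cartanUnit_rootVector {m k : ℕ} (hm : 1 ≤ m) (hml : m ≤ l) (hk : 1 ≤ k)
    (hkl : k ≤ l) :
    ⁅cartanUnit l m, rootVector l k⁆ = weight m k • rootVector l k := by
  simp (disch := omega) only [cartanUnit, rootVector, weight, Ring.lie_def, sub_mul, mul_sub,
    siteUnit_mul_siteUnit]
  obtain rfl | rfl | hkm := (by omega : k = m ∨ k = m + 1 ∨ (k ≠ m ∧ k ≠ m + 1)) <;>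
    simp (disch := omega) [if_neg]

lemma hB_eq_smul_cartanUnit {m : ℕ} (hm : 1 ≤ m) : hB l m = Complex.I • cartanUnit l m := by
  have h1 : siteIndex l m = m + 1 := by simp [siteIndex]
  have h2 : siteIndex l (-m) = m + l + 1 := by simp [siteIndex]; omega
  rw [hB, cartanUnit, siteUnit, siteUnit, h1, h2]

lemma hB_transpose (m : ℕ) : (hB l m)ᵀ = hB l m := by
  simp only [hB, transpose_smul, transpose_sub, e_transpose]

lemma rootVector_one :
    rootVector l 1 = e (2 * l + 1) 2 1 - e (2 * l + 1) 1 (l + 2) := by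
  simp only [rootVector, siteUnit, siteIndex]
  congr 2
  split_ifs <;> omega

lemma rootVector_of_two_le {m : ℕ} (hm : 2 ≤ m) :
    rootVector l m = e (2 * l + 1) (m + 1) m - e (2 * l + 1) (m + l) (m + l + 1) := by
  simp only [rootVector, siteUnit, siteIndex]
  congr 2 <;> split_ifs <;> omega

lemma yB_eq_yPart {m : ℕ} (hm : 1 ≤ m) : yB l m = yPart (rootVector l m) := by
  rcases eq_or_lt_of_le hm with rfl | hm
  · rw [yB, if_pos rfl, rootVector_one]
    simp only [yPart, Y, transpose_sub, e_transpose]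
    module
  · rw [yB, if_neg hm.ne', rootVector_of_two_le hm]
    simp only [yPart, Y, transpose_sub, e_transpose]
    module

lemma xB_eq_xPart {m : ℕ} (hm : 2 ≤ m) : xB l m = xPart (rootVector l m) := by
  rw [xB, if_neg (by omega), rootVector_of_two_le hm]
  simp only [xPart, X, transpose_sub, e_transpose]
  abel

lemma xB_one : xB l 1 = -xPart (rootVector l 1) := by
  rw [xB, if_pos rfl, rootVector_one]
  simp only [xPart, X, transpose_sub, e_transpose]
  abel

lemma lie_hB_rootVector {m k : ℕ} (hm : 1 ≤ m) (hml : m ≤ l) (hk : 1 ≤ k) (hkl : k ≤ l) :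
    ⁅hB l m, rootVector l k⁆ = weight m k • Complex.I • rootVector l k := by
  rw [hB_eq_smul_cartanUnit hm, smul_lie, lie_cartanUnit_rootVector hm hml hk hkl, smul_comm]

lemma rootVector_transpose (k : ℕ) :
    (rootVector l k)ᵀ = siteUnit l (k - 1) k - siteUnit l (-k) (1 - k) := by
  simp only [rootVector, transpose_sub, siteUnit_transpose]

lemma lie_rootVector_transpose {j k : ℕ} (hj : 1 ≤ j) (hjl : j ≤ l) (hk : 1 ≤ k)
    (hkl : k ≤ l) :
    ⁅rootVector l j, (rootVector l k)ᵀ⁆ =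
      if j = k then cartanUnit l k - cartanUnit l (k - 1) else 0 := by
  rw [rootVector_transpose]
  simp (disch := omega) only [rootVector, Ring.lie_def, sub_mul, mul_sub, siteUnit_mul_siteUnit]
  rcases eq_or_ne j k with rfl | hjk
  · simp (disch := omega) only [if_true, if_neg, sub_zero, zero_sub, sub_neg_eq_add, cartanUnit,
      Nat.cast_sub hj, Nat.cast_one, neg_sub]
    abel
  · simp (disch := omega) [if_neg, hjk]

lemma sum_mul_weight {k : ℕ} (hk : 1 ≤ k) (hkl : k ≤ l) :
    ∑ m ∈ Finset.Icc 1 l, (m : ℝ) * weight m k = 1 := by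
  have hpred : ∀ m, (k = m + 1) = (k - 1 = m) := fun m => propext (by omega)
  simp only [weight, mul_sub, mul_ite, mul_one, mul_zero, Finset.sum_sub_distrib, hpred,
    Finset.sum_ite_eq, Finset.mem_Icc]
  rw [if_pos ⟨hk, hkl⟩]
  split_ifs with h
  · rw [Nat.cast_sub hk]; ring
  · obtain rfl : k = 1 := by omega
    simp

noncomputable def drift (l : ℕ) : Matrix (Fin (2 * l + 1)) (Fin (2 * l + 1)) ℂ :=
  ∑ m ∈ Finset.Icc 1 l, (m : ℝ) • hB l m

noncomputable def dipole (l : ℕ) : Matrix (Fin (2 * l + 1)) (Fin (2 * l + 1)) ℂ :=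
  ∑ m ∈ Finset.Icc 1 l, yB l m

noncomputable def raising (l : ℕ) : Matrix (Fin (2 * l + 1)) (Fin (2 * l + 1)) ℂ :=
  ∑ k ∈ Finset.Icc 1 l, rootVector l k

lemma drift_transpose : (drift l)ᵀ = drift l := by
  simp only [drift, transpose_sum, transpose_smul, hB_transpose]

lemma lie_drift_rootVector {k : ℕ} (hk : 1 ≤ k) (hkl : k ≤ l) :
    ⁅drift l, rootVector l k⁆ = (1 : ℝ) • Complex.I • rootVector l k := by
  rw [drift, sum_lie, ← sum_mul_weight hk hkl, Finset.sum_smul]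
  refine Finset.sum_congr rfl fun m hm => ?_
  rw [Finset.mem_Icc] at hm
  rw [smul_lie, lie_hB_rootVector hm.1 hm.2 hk hkl, smul_smul]

lemma lie_drift_xPart_rootVector {k : ℕ} (hk : 1 ≤ k) (hkl : k ≤ l) :
    ⁅drift l, xPart (rootVector l k)⁆ = yPart (rootVector l k) := by
  rw [lie_xPart_of_lie_eq drift_transpose (lie_drift_rootVector hk hkl), one_smul]

lemma dipole_eq_yPart_raising : dipole l = yPart (raising l) := by
  rw [dipole, Finset.sum_congr rfl fun m hm => yB_eq_yPart (Finset.mem_Icc.mp hm).1]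
  simp only [yPart, raising, transpose_sum, ← Finset.sum_add_distrib, ← Finset.smul_sum]

lemma lie_drift_raising : ⁅drift l, raising l⁆ = (1 : ℝ) • Complex.I • raising l := by
  rw [raising, lie_sum, Finset.smul_sum, Finset.smul_sum]
  exact Finset.sum_congr rfl fun k hk =>
    lie_drift_rootVector (Finset.mem_Icc.mp hk).1 (Finset.mem_Icc.mp hk).2

lemma lie_drift_dipole : ⁅drift l, dipole l⁆ = -xPart (raising l) := by
  rw [dipole_eq_yPart_raising, lie_yPart_of_lie_eq drift_transpose lie_drift_raising, one_smul]

lemma lie_raising_transpose : ⁅raising l, (raising l)ᵀ⁆ = cartanUnit l l := by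
  rw [raising, transpose_sum, sum_lie_sum]
  calc ∑ j ∈ Finset.Icc 1 l, ∑ k ∈ Finset.Icc 1 l, ⁅rootVector l j, (rootVector l k)ᵀ⁆
      = ∑ j ∈ Finset.Icc 1 l, (cartanUnit l (j + 1 - 1) - cartanUnit l (j - 1)) := by
        refine Finset.sum_congr rfl fun j hj => ?_
        rw [Finset.mem_Icc] at hj
        rw [Finset.sum_congr rfl fun k hk => lie_rootVector_transpose hj.1 hj.2
          (Finset.mem_Icc.mp hk).1 (Finset.mem_Icc.mp hk).2, Finset.sum_ite_eq,
          if_pos (Finset.mem_Icc.mpr hj), Nat.add_sub_cancel]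
    _ = cartanUnit l l := by
        rw [← Finset.Ico_add_one_right_eq_Icc,
          Finset.sum_Ico_sub (f := fun j => cartanUnit l (j - 1)) (by omega)]
        simp [cartanUnit_zero]

lemma lie_dipole_xPart_raising (hl : 1 ≤ l) :
    ⁅dipole l, xPart (raising l)⁆ = (-2 : ℝ) • hB l l := by
  rw [dipole_eq_yPart_raising, lie_yPart_xPart, lie_raising_transpose, hB_eq_smul_cartanUnit hl]

lemma lie_hB_dipole {m : ℕ} (hm : 1 ≤ m) (hml : m ≤ l) :
    ⁅hB l m, dipole l⁆ =
      (if m < l then xPart (rootVector l (m + 1)) else 0) - xPart (rootVector l m) := by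
  rw [dipole, lie_sum]
  calc ∑ k ∈ Finset.Icc 1 l, ⁅hB l m, yB l k⁆
      = ∑ k ∈ Finset.Icc 1 l, -(weight m k • xPart (rootVector l k)) := by
        refine Finset.sum_congr rfl fun k hk => ?_
        rw [Finset.mem_Icc] at hk
        rw [yB_eq_yPart hk.1, lie_yPart_of_lie_eq (hB_transpose m)
          (lie_hB_rootVector hm hml hk.1 hk.2)]
    _ = _ := by
        simp only [weight, sub_smul, ite_smul, one_smul, zero_smul, neg_sub,
          Finset.sum_sub_distrib, Finset.sum_ite_eq', Finset.mem_Icc, Nat.zero_lt_succ, true_and,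
          ← Nat.lt_iff_add_one_le, hm, hml, and_self, if_true]

lemma lie_yPart_xPart_rootVector_succ {m : ℕ} (hm : 1 ≤ m) (hml : m < l) :
    ⁅yPart (rootVector l (m + 1)), xPart (rootVector l (m + 1))⁆ =
      (-2 : ℝ) • (hB l (m + 1) - hB l m) := by
  rw [lie_yPart_xPart,
    lie_rootVector_transpose (j := m + 1) (k := m + 1) (by omega) hml (by omega) hml, if_pos rfl,
    Nat.add_sub_cancel, smul_sub, hB_eq_smul_cartanUnit hm, hB_eq_smul_cartanUnit (by omega)]

section LieSpan

variable {K : LieSubalgebra ℝ (Matrix (Fin (2 * l + 1)) (Fin (2 * l + 1)) ℂ)}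

lemma hB_mem_and_xPart_rootVector_mem (hD : drift l ∈ K) (hV : dipole l ∈ K) {m : ℕ}
    (hm : 1 ≤ m) (hml : m ≤ l) : hB l m ∈ K ∧ xPart (rootVector l m) ∈ K := by
  have hl : 1 ≤ l := hm.trans hml
  induction hml using Nat.decreasingInduction with
  | self =>
    have hU : xPart (raising l) ∈ K := by
      rw [← neg_neg (xPart _), ← lie_drift_dipole]
      exact neg_mem (K.lie_mem hD hV)
    have hh : hB l l ∈ K := by
      have h := K.lie_mem hV hU
      rw [lie_dipole_xPart_raising hl] at h
      exact (K.toSubmodule.smul_mem_iff (by norm_num)).mp h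
    refine ⟨hh, ?_⟩
    have h := neg_mem (K.lie_mem hh hV)
    rwa [lie_hB_dipole hl le_rfl, if_neg (lt_irrefl l), zero_sub, neg_neg] at h
  | of_succ k hk ih =>
    obtain ⟨hh, hx⟩ := ih (by omega)
    have hy : yPart (rootVector l (k + 1)) ∈ K :=
      lie_drift_xPart_rootVector (by omega) hk ▸ K.lie_mem hD hx
    have hhk : hB l k ∈ K := by
      have h := K.lie_mem hy hx
      rw [lie_yPart_xPart_rootVector_succ hm hk] at h
      have hdiff := (K.toSubmodule.smul_mem_iff (by norm_num)).mp h
      exact sub_sub_cancel (hB l (k + 1)) (hB l k) ▸ sub_mem hh hdiff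
    refine ⟨hhk, ?_⟩
    have h := sub_mem hx (K.lie_mem hhk hV)
    rwa [lie_hB_dipole hm hk.le, if_pos hk, sub_sub_cancel] at h

end LieSpan

end Sites

theorem equally_spaced_so_generators_mem_general (l : ℕ) (ε δ : ℝ)
    (hε : ε ≠ 0) (hδ : δ ≠ 0)
    (H0 H1 : Matrix (Fin (2 * l + 1)) (Fin (2 * l + 1)) ℂ)
    (hH0 : H0 = ε • ∑ m ∈ Finset.Icc 1 l, (m : ℝ) • hB l m)
    (hH1 : H1 = δ • ∑ m ∈ Finset.Icc 1 l, yB l m) :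
    ∀ m, 1 ≤ m → m ≤ l →
      xB l m ∈ LieSubalgebra.lieSpan ℝ (Matrix (Fin (2 * l + 1)) (Fin (2 * l + 1)) ℂ)
          {H0, H1} ∧
      yB l m ∈ LieSubalgebra.lieSpan ℝ (Matrix (Fin (2 * l + 1)) (Fin (2 * l + 1)) ℂ)
          {H0, H1} ∧
      hB l m ∈ LieSubalgebra.lieSpan ℝ (Matrix (Fin (2 * l + 1)) (Fin (2 * l + 1)) ℂ)
          {H0, H1} := by
  set K := LieSubalgebra.lieSpan ℝ (Matrix (Fin (2 * l + 1)) (Fin (2 * l + 1)) ℂ) {H0, H1}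
  have hD : drift l ∈ K := (K.toSubmodule.smul_mem_iff hε).mp <|
    hH0 ▸ LieSubalgebra.subset_lieSpan (Set.mem_insert _ _)
  have hV : dipole l ∈ K := (K.toSubmodule.smul_mem_iff hδ).mp <|
    hH1 ▸ LieSubalgebra.subset_lieSpan (Set.mem_insert_of_mem _ rfl)
  intro m hm hml
  obtain ⟨hh, hx⟩ := hB_mem_and_xPart_rootVector_mem hD hV hm hml
  refine ⟨?_, ?_, hh⟩
  · rcases eq_or_lt_of_le hm with rfl | hm
    · exact xB_one ▸ neg_mem hx
    · exact xB_eq_xPart hm ▸ hx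
  · rw [yB_eq_yPart hm, ← lie_drift_xPart_rootVector hm hml]
    exact K.lie_mem hD hx

/-- for the system with `N = 2ℓ+1` equally spaced energy levels
and uniform dipole moments, `iH₀' = ε Σ_{m=1}^ℓ m·h_m` (`ε ≠ 0`),
`iH₁ = δ Σ_{m=1}^ℓ y_m` (`δ ≠ 0`), the Lie algebra generated by `iH₀'` and
`iH₁` contains all generators `x_m`, `y_m`, `h_m` for `1 ≤ m ≤ ℓ`. -/
theorem equally_spaced_so_generators_mem (l : ℕ) (hl : 1 ≤ l) (ε δ : ℝ)
    (hε : ε ≠ 0) (hδ : δ ≠ 0)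
    (H0 H1 : Matrix (Fin (2 * l + 1)) (Fin (2 * l + 1)) ℂ)
    (hH0 : H0 = ε • ∑ m ∈ Finset.Icc 1 l, (m : ℝ) • hB l m)
    (hH1 : H1 = δ • ∑ m ∈ Finset.Icc 1 l, yB l m) :
    ∀ m, 1 ≤ m → m ≤ l →
      xB l m ∈ LieSubalgebra.lieSpan ℝ (Matrix (Fin (2 * l + 1)) (Fin (2 * l + 1)) ℂ)
          {H0, H1} ∧
      yB l m ∈ LieSubalgebra.lieSpan ℝ (Matrix (Fin (2 * l + 1)) (Fin (2 * l + 1)) ℂ)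
          {H0, H1} ∧
      hB l m ∈ LieSubalgebra.lieSpan ℝ (Matrix (Fin (2 * l + 1)) (Fin (2 * l + 1)) ℂ)
          {H0, H1} :=
  equally_spaced_so_generators_mem_general l ε δ hε hδ H0 H1 hH0 hH1
end

section
/- If the Lie algebra L generated by iH₀' = Σ ε_m h_m and iH₁ = Σ δ_m y_m in the so(2ℓ+1) basis (all ε_m, δ_m nonzero) contains y₁, then L contains x_m, y_m, and h_m for all 1 ≤ m ≤ ℓ. -/
open Matrix

attribute [local instance 100] LieRing.ofAssociativeRing

/-!
Write `K` for the real Lie algebra generated by `H₀ = Σ ε_m h_m` and `H₁ = Σ δ_m y_m`.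
Since `h_k` acts on `y_1` only for `k = 1`, `⁅H₀, y₁⁆ = ε₁ x₁`; then `⁅x₁, y₁⁆ = -2 h₁`.
Inductively, once `x_k, y_k, h_k ∈ K`, the bracket `⁅h_k, H₁⁆` only sees `y_k` and `y_{k+1}`:
it equals `δ_k ⁅h_k, y_k⁆ + δ_{k+1} x_{k+1}`, which isolates `x_{k+1}`.
Then `y_{k+1} = -⁅h_k, x_{k+1}⁆` and `2 h_{k+1} = ⁅x_{k+1}, y_{k+1}⁆ + 2 h_k`.
-/

section MatrixUnits

variable {N a b c d : ℕ}

lemma e_mul_e_of_ne (h : b ≠ c) : e N a b * e N c d = 0 := by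
  ext i j
  simp only [Matrix.mul_apply, e, of_apply, Matrix.zero_apply]
  refine Finset.sum_eq_zero fun k _ => ?_
  split_ifs <;> first | (exfalso; omega) | ring

lemma e_mul_e_of_eq (h : b = c) (h1 : 1 ≤ b) (h2 : b ≤ N) : e N a b * e N c d = e N a d := by
  subst h
  ext i j
  rw [Matrix.mul_apply, Finset.sum_eq_single (⟨b - 1, by omega⟩ : Fin N)]
  · simp only [e, of_apply]
    split_ifs <;> first | rfl | (exfalso; omega) | ring
  · intro k _ hk
    have : (k : ℕ) ≠ b - 1 := fun hh => hk (Fin.ext hh)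
    simp only [e, of_apply]
    split_ifs <;> first | (exfalso; omega) | ring
  · simp

end MatrixUnits

section Brackets

variable {l k m : ℕ}

lemma xB_of_ne_one (h : m ≠ 1) :
    xB l m = X (2 * l + 1) (m + 1) m - X (2 * l + 1) (m + l) (m + l + 1) := if_neg h

lemma yB_of_ne_one (h : m ≠ 1) :
    yB l m = Y (2 * l + 1) (m + 1) m - Y (2 * l + 1) (m + l) (m + l + 1) := if_neg h

lemma lie_hB_one_yB_one (hl : 1 ≤ l) : ⁅hB l 1, yB l 1⁆ = xB l 1 := by
  rw [Ring.lie_def]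
  simp (disch := omega) only [hB, xB, yB, X, Y, reduceIte, smul_sub, smul_add, sub_mul,
    mul_sub, add_mul, mul_add, smul_mul_assoc, mul_smul_comm, smul_smul, e_mul_e_of_eq,
    e_mul_e_of_ne, Complex.I_mul_I]
  ring_nf
  module

lemma lie_xB_one_yB_one (hl : 1 ≤ l) : ⁅xB l 1, yB l 1⁆ = (-2 : ℝ) • hB l 1 := by
  rw [Ring.lie_def, ← Complex.coe_smul]
  simp (disch := omega) only [hB, xB, yB, X, Y, reduceIte, smul_sub, smul_add, sub_mul,
    mul_sub, add_mul, mul_add, smul_mul_assoc, mul_smul_comm, smul_smul, e_mul_e_of_eq,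
    e_mul_e_of_ne]
  ring_nf
  module

lemma lie_hB_yB_succ (hk : 1 ≤ k) (hkl : k + 1 ≤ l) :
    ⁅hB l k, yB l (k + 1)⁆ = xB l (k + 1) := by
  rw [Ring.lie_def]
  simp (disch := omega) only [hB, xB_of_ne_one, yB_of_ne_one, X, Y, smul_sub, smul_add,
    sub_mul, mul_sub, add_mul, mul_add, smul_mul_assoc, mul_smul_comm, smul_smul, e_mul_e_of_eq,
    e_mul_e_of_ne, Complex.I_mul_I]
  ring_nf
  module

lemma lie_hB_xB_succ (hk : 1 ≤ k) (hkl : k + 1 ≤ l) :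
    ⁅hB l k, xB l (k + 1)⁆ = -yB l (k + 1) := by
  rw [Ring.lie_def]
  simp (disch := omega) only [hB, xB_of_ne_one, yB_of_ne_one, X, Y, smul_sub, smul_add,
    sub_mul, mul_sub, smul_mul_assoc, mul_smul_comm, e_mul_e_of_eq, e_mul_e_of_ne]
  ring_nf
  module

lemma lie_xB_yB_succ (hk : 1 ≤ k) (hkl : k + 1 ≤ l) :
    ⁅xB l (k + 1), yB l (k + 1)⁆ = (2 : ℝ) • hB l (k + 1) - (2 : ℝ) • hB l k := by
  rw [Ring.lie_def, ← Complex.coe_smul, ← Complex.coe_smul]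
  simp (disch := omega) only [hB, xB_of_ne_one, yB_of_ne_one, X, Y, smul_sub, smul_add,
    sub_mul, mul_sub, add_mul, mul_add, smul_mul_assoc, mul_smul_comm, smul_smul, e_mul_e_of_eq,
    e_mul_e_of_ne]
  ring_nf
  module

lemma lie_hB_yB_of_ne (hk : 1 ≤ k) (hkl : k ≤ l) (hm : 1 ≤ m) (hml : m ≤ l) (hmk : m ≠ k)
    (hmk' : m ≠ k + 1) : ⁅hB l k, yB l m⁆ = 0 := by
  rw [Ring.lie_def]
  rcases eq_or_ne m 1 with rfl | hm1
  · simp (disch := omega) only [hB, yB, Y, reduceIte, smul_sub, smul_add, sub_mul, mul_sub,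
      add_mul, mul_add, smul_mul_assoc, mul_smul_comm, smul_smul, e_mul_e_of_ne]
    module
  · simp (disch := omega) only [hB, yB_of_ne_one, Y, smul_sub, smul_add, sub_mul, mul_sub,
      add_mul, mul_add, smul_mul_assoc, mul_smul_comm, smul_smul, e_mul_e_of_ne]
    module

lemma sum_smul_hB_lie_yB_one (ε : ℕ → ℝ) (hl : 1 ≤ l) :
    ⁅∑ m ∈ Finset.Icc 1 l, ε m • hB l m, yB l 1⁆ = ε 1 • xB l 1 := by
  rw [sum_lie, Finset.sum_eq_single_of_mem 1 (Finset.mem_Icc.mpr ⟨le_rfl, hl⟩),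
    smul_lie, lie_hB_one_yB_one hl]
  intro k hk hk1
  rw [Finset.mem_Icc] at hk
  rw [smul_lie, lie_hB_yB_of_ne hk.1 hk.2 le_rfl hl (Ne.symm hk1) (by omega), smul_zero]

lemma lie_hB_sum_smul_yB (δ : ℕ → ℝ) (hk : 1 ≤ k) (hkl : k + 1 ≤ l) :
    ⁅hB l k, ∑ m ∈ Finset.Icc 1 l, δ m • yB l m⁆ =
      δ k • ⁅hB l k, yB l k⁆ + δ (k + 1) • xB l (k + 1) := by
  rw [lie_sum, Finset.sum_eq_add_of_mem k (k + 1) (Finset.mem_Icc.mpr ⟨hk, by omega⟩)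
    (Finset.mem_Icc.mpr ⟨by omega, hkl⟩) (by omega), lie_smul, lie_smul, lie_hB_yB_succ hk hkl]
  rintro m hm ⟨hmk, hmk'⟩
  rw [Finset.mem_Icc] at hm
  rw [lie_smul, lie_hB_yB_of_ne hk (by omega) hm.1 hm.2 hmk hmk', smul_zero]

end Brackets

lemma LieSubalgebra.smul_mem_iff {R L : Type*} [Field R] [LieRing L] [LieAlgebra R L]
    (K : LieSubalgebra R L) {r : R} (hr : r ≠ 0) {x : L} : r • x ∈ K ↔ x ∈ K :=
  K.toSubmodule.smul_mem_iff hr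

section Generation

variable {l k : ℕ} {K : LieSubalgebra ℝ (Matrix (Fin (2 * l + 1)) (Fin (2 * l + 1)) ℂ)}

lemma generators_one_mem {ε : ℕ → ℝ} (hl : 1 ≤ l) (hε : ε 1 ≠ 0)
    (hH0 : ∑ m ∈ Finset.Icc 1 l, ε m • hB l m ∈ K) (hy : yB l 1 ∈ K) :
    xB l 1 ∈ K ∧ yB l 1 ∈ K ∧ hB l 1 ∈ K := by
  have hx : xB l 1 ∈ K := by
    have h := K.lie_mem hH0 hy
    rwa [sum_smul_hB_lie_yB_one ε hl, K.smul_mem_iff hε] at h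
  have hh : hB l 1 ∈ K := by
    have h := K.lie_mem hx hy
    rwa [lie_xB_one_yB_one hl, K.smul_mem_iff (by norm_num : (-2 : ℝ) ≠ 0)] at h
  exact ⟨hx, hy, hh⟩

lemma generators_succ_mem {δ : ℕ → ℝ} (hk : 1 ≤ k) (hkl : k + 1 ≤ l) (hδ : δ (k + 1) ≠ 0)
    (hH1 : ∑ m ∈ Finset.Icc 1 l, δ m • yB l m ∈ K)
    (hgen : xB l k ∈ K ∧ yB l k ∈ K ∧ hB l k ∈ K) :
    xB l (k + 1) ∈ K ∧ yB l (k + 1) ∈ K ∧ hB l (k + 1) ∈ K := by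
  obtain ⟨-, hyk, hhk⟩ := hgen
  have hx : xB l (k + 1) ∈ K := by
    have h := sub_mem (K.lie_mem hhk hH1) (K.smul_mem (δ k) (K.lie_mem hhk hyk))
    rwa [lie_hB_sum_smul_yB δ hk hkl, add_sub_cancel_left, K.smul_mem_iff hδ] at h
  have hy : yB l (k + 1) ∈ K := by
    have h := K.lie_mem hhk hx
    rwa [lie_hB_xB_succ hk hkl, neg_mem_iff] at h
  have hh : hB l (k + 1) ∈ K := by
    have h := add_mem (K.lie_mem hx hy) (K.smul_mem (2 : ℝ) hhk)
    rwa [lie_xB_yB_succ hk hkl, sub_add_cancel, K.smul_mem_iff two_ne_zero] at h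
  exact ⟨hx, hy, hh⟩

end Generation

/-- Lemma B: if the Lie algebra `L` generated by
`iH₀' = Σ ε_m h_m` and `iH₁ = Σ δ_m y_m` in the `so(2ℓ+1)` basis (all
`ε_m, δ_m` nonzero) contains `y₁`, then `L` contains `x_m`, `y_m` and `h_m`
for all `1 ≤ m ≤ ℓ`. -/
theorem lemma_so (l : ℕ) (ε δ : ℕ → ℝ)
    (hε : ∀ m, 1 ≤ m → m ≤ l → ε m ≠ 0) (hδ : ∀ m, 1 ≤ m → m ≤ l → δ m ≠ 0)
    (H0 H1 : Matrix (Fin (2 * l + 1)) (Fin (2 * l + 1)) ℂ)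
    (hH0 : H0 = ∑ m ∈ Finset.Icc 1 l, ε m • hB l m)
    (hH1 : H1 = ∑ m ∈ Finset.Icc 1 l, δ m • yB l m)
    (hy1 : yB l 1 ∈ LieSubalgebra.lieSpan ℝ
      (Matrix (Fin (2 * l + 1)) (Fin (2 * l + 1)) ℂ) {H0, H1}) :
    ∀ m, 1 ≤ m → m ≤ l →
      xB l m ∈ LieSubalgebra.lieSpan ℝ (Matrix (Fin (2 * l + 1)) (Fin (2 * l + 1)) ℂ)
          {H0, H1} ∧
      yB l m ∈ LieSubalgebra.lieSpan ℝ (Matrix (Fin (2 * l + 1)) (Fin (2 * l + 1)) ℂ)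
          {H0, H1} ∧
      hB l m ∈ LieSubalgebra.lieSpan ℝ (Matrix (Fin (2 * l + 1)) (Fin (2 * l + 1)) ℂ)
          {H0, H1} := by
  have hH0mem : H0 ∈ LieSubalgebra.lieSpan ℝ _ {H0, H1} := LieSubalgebra.subset_lieSpan (by simp)
  have hH1mem : H1 ∈ LieSubalgebra.lieSpan ℝ _ {H0, H1} := LieSubalgebra.subset_lieSpan (by simp)
  intro m hm
  induction m, hm using Nat.le_induction with
  | base => exact fun hl => generators_one_mem hl (hε 1 le_rfl hl) (hH0 ▸ hH0mem) hy1
  | succ k hk ih =>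
    exact fun hkl => generators_succ_mem hk hkl (hδ (k + 1) (by omega) hkl) (hH1 ▸ hH1mem)
      (ih (by omega))
end

section
/- For a system with N = 2ℓ+1 levels satisfying the symmetry μ_n = μ_{N-n} and d_n = d_{N-n}, the basis-changed operators iH₀' and iH₁ lie in the skew-Hermitian representation of so(2ℓ+1): specifically, iH₀' = Σ_{m=1}^{ℓ} Ẽ_m h_m and iH₁ = Σ_{m=1}^{ℓ} d̃_m y_m, where Ẽ_m = -Σ_{s=ℓ+1-m}^{ℓ} μ_s and d̃_m = d_{ℓ+1-m}. -/
open Matrix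

/-- The signed permutation matrix of the basis change `σ`:
`σ(|n⟩) = |ℓ+2-n⟩` for `1 ≤ n ≤ ℓ+1` and `σ(|n⟩) = (-1)^{n-ℓ-1}|n⟩` for
`ℓ+2 ≤ n ≤ 2ℓ+1` (1-based indices). -/
noncomputable def U (l : ℕ) : Matrix (Fin (2 * l + 1)) (Fin (2 * l + 1)) ℂ :=
  Matrix.of fun i j =>
    if (j : ℕ) + 1 ≤ l + 1 then
      (if (i : ℕ) + 1 + ((j : ℕ) + 1) = l + 2 then 1 else 0)
    else
      (if (i : ℕ) = (j : ℕ) then (-1 : ℂ) ^ ((j : ℕ) + 1 - l - 1) else 0)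

/-! ### auxiliary lemmas -/

lemma e_apply (N a b : ℕ) (i j : Fin N) :
    e N a b i j = if (i : ℕ) + 1 = a ∧ (j : ℕ) + 1 = b then 1 else 0 := rfl

def pn (l q : ℕ) : ℕ := if q ≤ l then l - q else q

noncomputable def sg (l q : ℕ) : ℂ := if q ≤ l then 1 else (-1) ^ (q - l)

lemma pn_lt (l : ℕ) (j : Fin (2 * l + 1)) : pn l (j : ℕ) < 2 * l + 1 := by
  have := j.isLt; unfold pn; split <;> omega

noncomputable def pf (l : ℕ) (j : Fin (2 * l + 1)) : Fin (2 * l + 1) :=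
  ⟨pn l (j : ℕ), pn_lt l j⟩

lemma U_apply (l : ℕ) (i j : Fin (2 * l + 1)) :
    U l i j = if i = pf l j then sg l (j : ℕ) else 0 := by
  have hj := j.isLt
  simp only [U, Matrix.of_apply]
  rcases le_or_gt (j : ℕ) l with h | h
  · have hpf : (pf l j : ℕ) = l - (j : ℕ) := if_pos h
    have hsg : sg l (j : ℕ) = 1 := if_pos h
    rw [if_pos (show (j : ℕ) + 1 ≤ l + 1 by omega), hsg]
    by_cases hi : (i : ℕ) = l - (j : ℕ)
    · rw [if_pos (by omega), if_pos (Fin.ext (by rw [hpf]; exact hi))]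
    · rw [if_neg (by omega), if_neg (fun hc => hi (by rw [Fin.ext_iff, hpf] at hc; exact hc))]
  · have hpf : (pf l j : ℕ) = (j : ℕ) := if_neg (by omega)
    have hsg : sg l (j : ℕ) = (-1) ^ ((j : ℕ) - l) := if_neg (by omega)
    rw [if_neg (by omega), hsg]
    by_cases hi : (i : ℕ) = (j : ℕ)
    · rw [if_pos hi, if_pos (Fin.ext (by rw [hpf]; exact hi))]
      congr 1
      omega
    · rw [if_neg hi, if_neg (fun hc => hi (by rw [Fin.ext_iff, hpf] at hc; exact hc))]

lemma mul_U_apply (l : ℕ) (M : Matrix (Fin (2 * l + 1)) (Fin (2 * l + 1)) ℂ)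
    (i j : Fin (2 * l + 1)) : (M * U l) i j = sg l (j : ℕ) * M i (pf l j) := by
  rw [Matrix.mul_apply]
  have h : ∀ b : Fin (2 * l + 1), M i b * U l b j
      = if b = pf l j then M i b * sg l (j : ℕ) else 0 := by
    intro b; rw [U_apply]; split <;> simp
  rw [Finset.sum_congr rfl fun b _ => h b,
    Finset.sum_ite_eq' Finset.univ (pf l j) fun b => M i b * sg l (j : ℕ),
    if_pos (Finset.mem_univ _)]
  ring

lemma UT_mul_apply (l : ℕ) (M : Matrix (Fin (2 * l + 1)) (Fin (2 * l + 1)) ℂ)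
    (i j : Fin (2 * l + 1)) : ((U l)ᵀ * M) i j = sg l (i : ℕ) * M (pf l i) j := by
  rw [Matrix.mul_apply]
  have h : ∀ a : Fin (2 * l + 1), (U l)ᵀ i a * M a j
      = if a = pf l i then sg l (i : ℕ) * M a j else 0 := by
    intro a; rw [Matrix.transpose_apply, U_apply]; split <;> simp
  rw [Finset.sum_congr rfl fun a _ => h a,
    Finset.sum_ite_eq' Finset.univ (pf l i) fun a => sg l (i : ℕ) * M a j,
    if_pos (Finset.mem_univ _)]

lemma conj_apply (l : ℕ) (M : Matrix (Fin (2 * l + 1)) (Fin (2 * l + 1)) ℂ)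
    (i j : Fin (2 * l + 1)) :
    ((U l)ᵀ * M * U l) i j = sg l (i : ℕ) * sg l (j : ℕ) * M (pf l i) (pf l j) := by
  rw [mul_U_apply, UT_mul_apply]; ring

lemma hB_apply (l m : ℕ) (i j : Fin (2 * l + 1)) :
    hB l m i j = Complex.I *
      ((if (i : ℕ) + 1 = m + 1 ∧ (j : ℕ) + 1 = m + 1 then 1 else 0)
        - (if (i : ℕ) + 1 = m + l + 1 ∧ (j : ℕ) + 1 = m + l + 1 then 1 else 0)) := by
  simp only [hB, Matrix.smul_apply, Matrix.sub_apply, e_apply, smul_eq_mul]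

lemma Y_apply (N a b : ℕ) (i j : Fin N) :
    Y N a b i j = Complex.I * ((if (i : ℕ) + 1 = a ∧ (j : ℕ) + 1 = b then 1 else 0)
      + (if (i : ℕ) + 1 = b ∧ (j : ℕ) + 1 = a then 1 else 0)) := by
  simp only [Y, Matrix.smul_apply, Matrix.add_apply, e_apply, smul_eq_mul]

lemma yB_apply_one (l : ℕ) (i j : Fin (2 * l + 1)) :
    yB l 1 i j = Complex.I *
      (((if (i : ℕ) + 1 = 1 ∧ (j : ℕ) + 1 = 2 then 1 else 0)
          + (if (i : ℕ) + 1 = 2 ∧ (j : ℕ) + 1 = 1 then 1 else 0))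
        - ((if (i : ℕ) + 1 = l + 2 ∧ (j : ℕ) + 1 = 1 then 1 else 0)
          + (if (i : ℕ) + 1 = 1 ∧ (j : ℕ) + 1 = l + 2 then 1 else 0))) := by
  unfold yB
  rw [if_pos rfl, Matrix.sub_apply, Y_apply, Y_apply]
  ring

lemma yB_apply_ne (l m : ℕ) (hm : m ≠ 1) (i j : Fin (2 * l + 1)) :
    yB l m i j = Complex.I *
      (((if (i : ℕ) + 1 = m + 1 ∧ (j : ℕ) + 1 = m then 1 else 0)
          + (if (i : ℕ) + 1 = m ∧ (j : ℕ) + 1 = m + 1 then 1 else 0))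
        - ((if (i : ℕ) + 1 = m + l ∧ (j : ℕ) + 1 = m + l + 1 then 1 else 0)
          + (if (i : ℕ) + 1 = m + l + 1 ∧ (j : ℕ) + 1 = m + l then 1 else 0))) := by
  unfold yB
  rw [if_neg hm, Matrix.sub_apply, Y_apply, Y_apply]
  ring

lemma yB_apply_zero (l m : ℕ) (i j : Fin (2 * l + 1))
    (h1 : ¬((i : ℕ) + 1 = m + 1 ∧ (j : ℕ) + 1 = m))
    (h2 : ¬((i : ℕ) + 1 = m ∧ (j : ℕ) + 1 = m + 1))
    (h3 : ¬(m = 1 ∧ (i : ℕ) + 1 = l + 2 ∧ (j : ℕ) + 1 = 1))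
    (h4 : ¬(m = 1 ∧ (i : ℕ) + 1 = 1 ∧ (j : ℕ) + 1 = l + 2))
    (h5 : ¬(m ≠ 1 ∧ (i : ℕ) + 1 = m + l ∧ (j : ℕ) + 1 = m + l + 1))
    (h6 : ¬(m ≠ 1 ∧ (i : ℕ) + 1 = m + l + 1 ∧ (j : ℕ) + 1 = m + l)) :
    yB l m i j = 0 := by
  rcases eq_or_ne m 1 with rfl | hm1
  · rw [yB_apply_one, if_neg (by omega), if_neg (by omega), if_neg (by omega),
      if_neg (by omega)]
    ring
  · rw [yB_apply_ne l m hm1, if_neg (by omega), if_neg (by omega), if_neg (by omega),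
      if_neg (by omega)]
    ring

lemma sum_Icc_bot {M : Type*} [AddCommMonoid M] (f : ℕ → M) (a b : ℕ) (h : a ≤ b) :
    ∑ n ∈ Finset.Icc a b, f n = f a + ∑ n ∈ Finset.Icc (a + 1) b, f n := by
  rw [← Finset.Ico_add_one_right_eq_Icc, Finset.sum_eq_sum_Ico_succ_bot (by omega), Finset.Ico_add_one_right_eq_Icc]

lemma sumdiag_apply (N : ℕ) (E : ℕ → ℝ) (i j : Fin N) :
    (∑ n ∈ Finset.Icc 1 N, (E n : ℂ) • e N n n) i j
      = if (i : ℕ) = (j : ℕ) then (E ((i : ℕ) + 1) : ℂ) else 0 := by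
  have hi := i.isLt
  rw [Matrix.sum_apply]
  simp only [Matrix.smul_apply, e_apply, smul_eq_mul]
  by_cases hij : (i : ℕ) = (j : ℕ)
  · rw [if_pos hij, Finset.sum_eq_single_of_mem ((i : ℕ) + 1) (Finset.mem_Icc.mpr (by omega)) ?_]
    · rw [if_pos ⟨rfl, by omega⟩, mul_one]
    · intro m hm hne
      simp only [Finset.mem_Icc] at hm
      rw [if_neg (by omega), mul_zero]
  · rw [if_neg hij]
    refine Finset.sum_eq_zero fun m hm => ?_
    simp only [Finset.mem_Icc] at hm
    rw [if_neg (by omega), mul_zero]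

lemma sumoff_apply (N : ℕ) (d : ℕ → ℝ) (i j : Fin (N + 1)) :
    (∑ n ∈ Finset.Icc 1 N, (d n : ℂ) • (e (N + 1) n (n + 1) + e (N + 1) (n + 1) n)) i j
      = if (i : ℕ) + 1 = (j : ℕ) then (d ((i : ℕ) + 1) : ℂ)
        else if (j : ℕ) + 1 = (i : ℕ) then (d ((j : ℕ) + 1) : ℂ) else 0 := by
  have hi := i.isLt; have hj := j.isLt
  rw [Matrix.sum_apply]
  simp only [Matrix.smul_apply, Matrix.add_apply, e_apply, smul_eq_mul]
  by_cases hij : (i : ℕ) + 1 = (j : ℕ)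
  · rw [if_pos hij, Finset.sum_eq_single_of_mem ((i : ℕ) + 1) (Finset.mem_Icc.mpr (by omega)) ?_]
    · rw [if_pos ⟨rfl, by omega⟩, if_neg (by omega)]
      ring
    · intro m hm hne
      simp only [Finset.mem_Icc] at hm
      rw [if_neg (by omega), if_neg (by omega)]
      ring
  · rw [if_neg hij]
    by_cases hji : (j : ℕ) + 1 = (i : ℕ)
    · rw [if_pos hji, Finset.sum_eq_single_of_mem ((j : ℕ) + 1) (Finset.mem_Icc.mpr (by omega)) ?_]
      · rw [if_neg (by omega), if_pos ⟨by omega, rfl⟩]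
        ring
      · intro m hm hne
        simp only [Finset.mem_Icc] at hm
        rw [if_neg (by omega), if_neg (by omega)]
        ring
    · rw [if_neg hji]
      refine Finset.sum_eq_zero fun m hm => ?_
      simp only [Finset.mem_Icc] at hm
      rw [if_neg (by omega), if_neg (by omega)]
      ring

lemma teleE (l : ℕ) (E : ℕ → ℝ) :
    ∀ m, m ≤ l → ∑ s ∈ Finset.Icc (l + 1 - m) l, (E (s + 1) - E s) = E (l + 1) - E (l + 1 - m) := by
  intro m
  induction m with
  | zero =>
    intro _
    rw [show l + 1 - 0 = l + 1 from rfl, Finset.Icc_eq_empty (by omega), Finset.sum_empty]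
    ring
  | succ k ih =>
    intro hk
    have h1 : l + 1 - (k + 1) = l - k := by omega
    rw [h1, sum_Icc_bot _ _ _ (by omega)]
    have h3 : l - k + 1 = l + 1 - k := by omega
    rw [h3, ih (by omega)]
    ring
lemma hsq_odd (x : ℕ) : (-1 : ℂ) ^ (2 * x + 1) = -1 := by
  rw [pow_succ, pow_mul]
  norm_num

/-- for an `N = 2ℓ+1`-level system satisfying the symmetry
`μ_n = μ_{N-n}`, `d_n = d_{N-n}`, the basis-changed operators lie in the
skew-Hermitian representation of `so(2ℓ+1)`:
`iH₀' = Σ_{m=1}^ℓ Ẽ_m h_m` and `iH₁ = Σ_{m=1}^ℓ d̃_m y_m` with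
`Ẽ_m = -Σ_{s=ℓ+1-m}^ℓ μ_s` and `d̃_m = d_{ℓ+1-m}`. -/
theorem symmetric_system_in_so_basis (l : ℕ) (E d : ℕ → ℝ)
    (hmono : ∀ n, 1 ≤ n → n ≤ 2 * l → E n ≤ E (n + 1))
    (hμsym : ∀ n, 1 ≤ n → n ≤ 2 * l →
      E (n + 1) - E n = E (2 * l + 1 - n + 1) - E (2 * l + 1 - n))
    (hdsym : ∀ n, 1 ≤ n → n ≤ 2 * l → d n = d (2 * l + 1 - n))
    (H0 H0' H1 : Matrix (Fin (2 * l + 1)) (Fin (2 * l + 1)) ℂ)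
    (hH0 : H0 = ∑ n ∈ Finset.Icc 1 (2 * l + 1), (E n : ℂ) • e (2 * l + 1) n n)
    (hH0' : H0' = H0 - ((Matrix.trace H0 / ((2 * l + 1 : ℕ) : ℂ)) •
      (1 : Matrix (Fin (2 * l + 1)) (Fin (2 * l + 1)) ℂ)))
    (hH1 : H1 = ∑ n ∈ Finset.Icc 1 (2 * l),
      (d n : ℂ) • (e (2 * l + 1) n (n + 1) + e (2 * l + 1) (n + 1) n)) :
    (U l)ᵀ * (Complex.I • H0') * U l =
      ∑ m ∈ Finset.Icc 1 l,
        (-(∑ s ∈ Finset.Icc (l + 1 - m) l, (E (s + 1) - E s))) • hB l m ∧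
    (U l)ᵀ * (Complex.I • H1) * U l =
      ∑ m ∈ Finset.Icc 1 l, d (l + 1 - m) • yB l m := by
  have hpfv : ∀ i : Fin (2 * l + 1), ((pf l i : ℕ)) = pn l (i : ℕ) := fun _ => rfl
  have hpair : ∀ m, m ≤ l → E (l + 1 - m) + E (l + 1 + m) = 2 * E (l + 1) := by
    intro m
    induction m with
    | zero =>
      intro _
      rw [show l + 1 - 0 = l + 1 from rfl, Nat.add_zero]
      ring
    | succ k ih =>
      intro hk
      have hh := hμsym (l - k) (by omega) (by omega)
      rw [show l - k + 1 = l + 1 - k from by omega,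
        show 2 * l + 1 - (l - k) = l + 1 + k from by omega] at hh
      rw [show l + 1 - (k + 1) = l - k from by omega,
        show l + 1 + (k + 1) = l + 1 + k + 1 from by omega]
      have hih := ih (by omega)
      linarith
  have hH0e : ∀ a b : Fin (2 * l + 1),
      H0 a b = if (a : ℕ) = (b : ℕ) then (E ((a : ℕ) + 1) : ℂ) else 0 := by
    intro a b; rw [hH0]; exact sumdiag_apply _ _ a b
  have hsumIcc : ∀ m, m ≤ l →
      ∑ n ∈ Finset.Icc (l + 1 - m) (l + 1 + m), E n = ((2 * m + 1 : ℕ) : ℝ) * E (l + 1) := by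
    intro m
    induction m with
    | zero =>
      intro _
      rw [show l + 1 - 0 = l + 1 from rfl, Nat.add_zero, Finset.Icc_self, Finset.sum_singleton]
      push_cast; ring
    | succ k ih =>
      intro hk
      rw [show l + 1 - (k + 1) = l - k from by omega,
        show l + 1 + (k + 1) = (l + 1 + k) + 1 from by omega,
        Finset.sum_Icc_succ_top (by omega), sum_Icc_bot _ _ _ (by omega),
        show l - k + 1 = l + 1 - k from by omega, ih (by omega)]
      have hp := hpair (k + 1) hk
      rw [show l + 1 - (k + 1) = l - k from by omega,
        show l + 1 + (k + 1) = l + 1 + k + 1 from by omega] at hp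
      push_cast
      linarith
  have hNne : ((2 * l + 1 : ℕ) : ℂ) ≠ 0 := Nat.cast_ne_zero.mpr (by omega)
  have htr : Matrix.trace H0 / ((2 * l + 1 : ℕ) : ℂ) = (E (l + 1) : ℂ) := by
    have h1 : Matrix.trace H0 = ∑ i : Fin (2 * l + 1), (E ((i : ℕ) + 1) : ℂ) := by
      unfold Matrix.trace Matrix.diag
      exact Finset.sum_congr rfl fun i _ => by rw [hH0e i i, if_pos rfl]
    have h2 : ∑ k ∈ Finset.range (2 * l + 1), E (k + 1) = ((2 * l + 1 : ℕ) : ℝ) * E (l + 1) := by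
      have h3 := hsumIcc l le_rfl
      rw [← Finset.Ico_add_one_right_eq_Icc, Finset.sum_Ico_eq_sum_range] at h3
      rw [show l + 1 + l + 1 - (l + 1 - l) = 2 * l + 1 from by omega,
        show l + 1 - l = 1 from by omega] at h3
      rw [← h3]
      exact Finset.sum_congr rfl fun k _ => by rw [Nat.add_comm]
    rw [div_eq_iff hNne, h1, Fin.sum_univ_eq_sum_range (fun k => (E (k + 1) : ℂ)) (2 * l + 1),
      show (∑ k ∈ Finset.range (2 * l + 1), (E (k + 1) : ℂ))
        = ((∑ k ∈ Finset.range (2 * l + 1), E (k + 1) : ℝ) : ℂ) from by push_cast; rfl,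
      h2]
    push_cast
    ring
  have hH0'e : ∀ a b : Fin (2 * l + 1), H0' a b
      = if (a : ℕ) = (b : ℕ) then ((E ((a : ℕ) + 1) : ℂ) - (E (l + 1) : ℂ)) else 0 := by
    intro a b
    rw [hH0', Matrix.sub_apply, Matrix.smul_apply, Matrix.one_apply, htr, hH0e]
    by_cases h : (a : ℕ) = (b : ℕ)
    · rw [if_pos h, if_pos h, if_pos (Fin.ext h), smul_eq_mul, mul_one]
    · rw [if_neg h, if_neg h, if_neg (fun hc => h (congrArg Fin.val hc)), smul_eq_mul, mul_zero,
        sub_zero]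
  have hH1e : ∀ a b : Fin (2 * l + 1), H1 a b
      = if (a : ℕ) + 1 = (b : ℕ) then (d ((a : ℕ) + 1) : ℂ)
        else if (b : ℕ) + 1 = (a : ℕ) then (d ((b : ℕ) + 1) : ℂ) else 0 := by
    intro a b; rw [hH1]; exact sumoff_apply (2 * l) d a b
  constructor
  · ext i j
    have hi := i.isLt
    have hj := j.isLt
    rw [conj_apply, Matrix.smul_apply, smul_eq_mul, hH0'e, Matrix.sum_apply]
    simp only [Matrix.smul_apply, Complex.real_smul]
    rw [hpfv i, hpfv j]
    by_cases hij : (i : ℕ) = (j : ℕ)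
    · rw [show pn l (j : ℕ) = pn l (i : ℕ) from by rw [hij], if_pos rfl]
      by_cases h1 : (i : ℕ) ≤ l
      · have hv : pn l (i : ℕ) = l - (i : ℕ) := if_pos h1
        have hsi : sg l (i : ℕ) = 1 := if_pos h1
        have hsj : sg l (j : ℕ) = 1 := if_pos (by omega)
        rw [hv, hsi, hsj]
        by_cases h0 : (i : ℕ) = 0
        · rw [show l - (i : ℕ) + 1 = l + 1 from by omega, sub_self]
          simp only [mul_zero]
          symm
          refine Finset.sum_eq_zero fun m hm => ?_
          simp only [Finset.mem_Icc] at hm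
          rw [hB_apply, if_neg (by omega), if_neg (by omega)]
          ring
        · rw [Finset.sum_eq_single_of_mem (i : ℕ) (Finset.mem_Icc.mpr (by omega)) ?_]
          · rw [hB_apply, if_pos ⟨rfl, by omega⟩, if_neg (by omega),
              teleE l E (i : ℕ) h1, show l - (i : ℕ) + 1 = l + 1 - (i : ℕ) from by omega]
            push_cast
            ring
          · intro m hm hne
            simp only [Finset.mem_Icc] at hm
            rw [hB_apply, if_neg (by omega), if_neg (by omega)]
            ring
      · have hv : pn l (i : ℕ) = (i : ℕ) := if_neg h1
        have hsi : sg l (i : ℕ) = (-1 : ℂ) ^ ((i : ℕ) - l) := if_neg h1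
        have hsj : sg l (j : ℕ) = (-1 : ℂ) ^ ((i : ℕ) - l) := by rw [← hij]; exact hsi
        have hsq : sg l (i : ℕ) * sg l (j : ℕ) = 1 := by
          rw [hsi, hsj, ← mul_pow]
          norm_num
        rw [hsq, one_mul, hv]
        rw [Finset.sum_eq_single_of_mem ((i : ℕ) - l) (Finset.mem_Icc.mpr (by omega)) ?_]
        · rw [hB_apply, if_neg (by omega), if_pos ⟨by omega, by omega⟩,
            teleE l E ((i : ℕ) - l) (by omega),
            show l + 1 - ((i : ℕ) - l) = 2 * l + 1 - (i : ℕ) from by omega]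
          have hp := hpair ((i : ℕ) - l) (by omega)
          rw [show l + 1 - ((i : ℕ) - l) = 2 * l + 1 - (i : ℕ) from by omega,
            show l + 1 + ((i : ℕ) - l) = (i : ℕ) + 1 from by omega] at hp
          have hc : (E ((i : ℕ) + 1) : ℂ) - (E (l + 1) : ℂ)
              = (E (l + 1) : ℂ) - (E (2 * l + 1 - (i : ℕ)) : ℂ) := by
            have hr : E ((i : ℕ) + 1) - E (l + 1)
                = E (l + 1) - E (2 * l + 1 - (i : ℕ)) := by linarith
            exact_mod_cast congrArg Complex.ofReal hr
          rw [hc]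
          push_cast
          ring
        · intro m hm hne
          simp only [Finset.mem_Icc] at hm
          rw [hB_apply, if_neg (by omega), if_neg (by omega)]
          ring
    · have hpn : pn l (i : ℕ) ≠ pn l (j : ℕ) := by unfold pn; split_ifs <;> omega
      rw [if_neg hpn]
      simp only [mul_zero]
      symm
      refine Finset.sum_eq_zero fun m hm => ?_
      simp only [Finset.mem_Icc] at hm
      rw [hB_apply, if_neg (by omega), if_neg (by omega)]
      ring
  · ext i j
    have hi := i.isLt
    have hj := j.isLt
    rw [conj_apply, Matrix.smul_apply, smul_eq_mul, hH1e, Matrix.sum_apply]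
    simp only [Matrix.smul_apply, Complex.real_smul]
    rw [hpfv i, hpfv j]
    by_cases h1 : (i : ℕ) ≤ l <;> by_cases h2 : (j : ℕ) ≤ l
    · -- A : both in the "flip" zone
      have hvi : pn l (i : ℕ) = l - (i : ℕ) := if_pos h1
      have hvj : pn l (j : ℕ) = l - (j : ℕ) := if_pos h2
      have hsi : sg l (i : ℕ) = 1 := if_pos h1
      have hsj : sg l (j : ℕ) = 1 := if_pos h2
      rw [hvi, hvj, hsi, hsj]
      by_cases hA1 : (i : ℕ) = (j : ℕ) + 1
      · rw [if_pos (by omega)]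
        rw [Finset.sum_eq_single_of_mem (i : ℕ) (Finset.mem_Icc.mpr (by omega)) ?_]
        · rcases eq_or_ne (i : ℕ) 1 with h1i | h1i
          · rw [h1i, yB_apply_one, if_neg (by omega), if_pos (by omega), if_neg (by omega),
              if_neg (by omega), show l - 1 + 1 = l + 1 - 1 from by omega]
            push_cast
            ring
          · rw [yB_apply_ne l (i : ℕ) h1i, if_pos (by omega), if_neg (by omega),
              if_neg (by omega), if_neg (by omega),
              show l - (i : ℕ) + 1 = l + 1 - (i : ℕ) from by omega]
            push_cast
            ring
        · intro m hm hne
          simp only [Finset.mem_Icc] at hm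
          rw [yB_apply_zero l m i j (by omega) (by omega) (by omega) (by omega) (by omega)
            (by omega), mul_zero]
      · by_cases hA2 : (j : ℕ) = (i : ℕ) + 1
        · rw [if_neg (by omega), if_pos (by omega)]
          rw [Finset.sum_eq_single_of_mem (j : ℕ) (Finset.mem_Icc.mpr (by omega)) ?_]
          · rcases eq_or_ne (j : ℕ) 1 with h1j | h1j
            · rw [h1j, yB_apply_one, if_pos (by omega), if_neg (by omega), if_neg (by omega),
                if_neg (by omega), show l - 1 + 1 = l + 1 - 1 from by omega]
              push_cast
              ring
            · rw [yB_apply_ne l (j : ℕ) h1j, if_neg (by omega), if_pos (by omega),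
                if_neg (by omega), if_neg (by omega),
                show l - (j : ℕ) + 1 = l + 1 - (j : ℕ) from by omega]
              push_cast
              ring
          · intro m hm hne
            simp only [Finset.mem_Icc] at hm
            rw [yB_apply_zero l m i j (by omega) (by omega) (by omega) (by omega) (by omega)
              (by omega), mul_zero]
        · rw [if_neg (by omega), if_neg (by omega)]
          simp only [mul_zero]
          symm
          refine Finset.sum_eq_zero fun m hm => ?_
          simp only [Finset.mem_Icc] at hm
          rw [yB_apply_zero l m i j (by omega) (by omega) (by omega) (by omega) (by omega)
            (by omega), mul_zero]
    · -- B : i flips, j fixed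
      have hvi : pn l (i : ℕ) = l - (i : ℕ) := if_pos h1
      have hvj : pn l (j : ℕ) = (j : ℕ) := if_neg h2
      have hsi : sg l (i : ℕ) = 1 := if_pos h1
      rw [hvi, hvj, hsi]
      by_cases hB1 : (i : ℕ) = 0 ∧ (j : ℕ) = l + 1
      · have hsj : sg l (j : ℕ) = -1 := by
          rw [show sg l (j : ℕ) = (-1 : ℂ) ^ ((j : ℕ) - l) from if_neg h2,
            show (j : ℕ) - l = 1 from by omega, pow_one]
        rw [hsj, if_pos (by omega)]
        rw [Finset.sum_eq_single_of_mem 1 (Finset.mem_Icc.mpr (by omega)) ?_]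
        · rw [yB_apply_one, if_neg (by omega), if_neg (by omega), if_neg (by omega),
            if_pos (by omega)]
          have hd := hdsym l (by omega) (by omega)
          rw [show 2 * l + 1 - l = l + 1 from by omega] at hd
          rw [show l - (i : ℕ) + 1 = l + 1 from by omega, show l + 1 - 1 = l from by omega, hd]
          push_cast
          ring
        · intro m hm hne
          simp only [Finset.mem_Icc] at hm
          rw [yB_apply_zero l m i j (by omega) (by omega) (by omega) (by omega) (by omega)
            (by omega), mul_zero]
      · rw [if_neg (by omega), if_neg (by omega)]
        simp only [mul_zero]
        symm
        refine Finset.sum_eq_zero fun m hm => ?_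
        simp only [Finset.mem_Icc] at hm
        rw [yB_apply_zero l m i j (by omega) (by omega) (by omega) (by omega) (by omega)
          (by omega), mul_zero]
    · -- C : i fixed, j flips
      have hvi : pn l (i : ℕ) = (i : ℕ) := if_neg h1
      have hvj : pn l (j : ℕ) = l - (j : ℕ) := if_pos h2
      have hsj : sg l (j : ℕ) = 1 := if_pos h2
      rw [hvi, hvj, hsj]
      by_cases hC1 : (j : ℕ) = 0 ∧ (i : ℕ) = l + 1
      · have hsi : sg l (i : ℕ) = -1 := by
          rw [show sg l (i : ℕ) = (-1 : ℂ) ^ ((i : ℕ) - l) from if_neg h1,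
            show (i : ℕ) - l = 1 from by omega, pow_one]
        rw [hsi, if_neg (by omega), if_pos (by omega)]
        rw [Finset.sum_eq_single_of_mem 1 (Finset.mem_Icc.mpr (by omega)) ?_]
        · rw [yB_apply_one, if_neg (by omega), if_neg (by omega), if_pos (by omega),
            if_neg (by omega)]
          have hd := hdsym l (by omega) (by omega)
          rw [show 2 * l + 1 - l = l + 1 from by omega] at hd
          rw [show l - (j : ℕ) + 1 = l + 1 from by omega, show l + 1 - 1 = l from by omega, hd]
          push_cast
          ring
        · intro m hm hne
          simp only [Finset.mem_Icc] at hm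
          rw [yB_apply_zero l m i j (by omega) (by omega) (by omega) (by omega) (by omega)
            (by omega), mul_zero]
      · rw [if_neg (by omega), if_neg (by omega)]
        simp only [mul_zero]
        symm
        refine Finset.sum_eq_zero fun m hm => ?_
        simp only [Finset.mem_Icc] at hm
        rw [yB_apply_zero l m i j (by omega) (by omega) (by omega) (by omega) (by omega)
          (by omega), mul_zero]
    · -- D : both fixed
      have hvi : pn l (i : ℕ) = (i : ℕ) := if_neg h1
      have hvj : pn l (j : ℕ) = (j : ℕ) := if_neg h2
      have hsi : sg l (i : ℕ) = (-1 : ℂ) ^ ((i : ℕ) - l) := if_neg h1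
      have hsj : sg l (j : ℕ) = (-1 : ℂ) ^ ((j : ℕ) - l) := if_neg h2
      rw [hvi, hvj]
      by_cases hD1 : (j : ℕ) = (i : ℕ) + 1
      · have hsq : sg l (i : ℕ) * sg l (j : ℕ) = -1 := by
          rw [hsi, hsj, ← pow_add,
            show (i : ℕ) - l + ((j : ℕ) - l) = 2 * ((i : ℕ) - l) + 1 from by omega, hsq_odd]
        rw [hsq, if_pos (by omega)]
        rw [Finset.sum_eq_single_of_mem ((i : ℕ) - l + 1) (Finset.mem_Icc.mpr (by omega)) ?_]
        · rw [yB_apply_ne l ((i : ℕ) - l + 1) (by omega), if_neg (by omega), if_neg (by omega),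
            if_pos (by omega), if_neg (by omega)]
          have hd := hdsym ((i : ℕ) + 1) (by omega) (by omega)
          rw [show 2 * l + 1 - ((i : ℕ) + 1) = l + 1 - ((i : ℕ) - l + 1) from by omega] at hd
          rw [hd]
          push_cast
          ring
        · intro m hm hne
          simp only [Finset.mem_Icc] at hm
          rw [yB_apply_zero l m i j (by omega) (by omega) (by omega) (by omega) (by omega)
            (by omega), mul_zero]
      · by_cases hD2 : (i : ℕ) = (j : ℕ) + 1
        · have hsq : sg l (i : ℕ) * sg l (j : ℕ) = -1 := by
            rw [hsi, hsj, ← pow_add,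
              show (i : ℕ) - l + ((j : ℕ) - l) = 2 * ((j : ℕ) - l) + 1 from by omega, hsq_odd]
          rw [hsq, if_neg (by omega), if_pos (by omega)]
          rw [Finset.sum_eq_single_of_mem ((j : ℕ) - l + 1) (Finset.mem_Icc.mpr (by omega)) ?_]
          · rw [yB_apply_ne l ((j : ℕ) - l + 1) (by omega), if_neg (by omega), if_neg (by omega),
              if_neg (by omega), if_pos (by omega)]
            have hd := hdsym ((j : ℕ) + 1) (by omega) (by omega)
            rw [show 2 * l + 1 - ((j : ℕ) + 1) = l + 1 - ((j : ℕ) - l + 1) from by omega] at hd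
            rw [hd]
            push_cast
            ring
          · intro m hm hne
            simp only [Finset.mem_Icc] at hm
            rw [yB_apply_zero l m i j (by omega) (by omega) (by omega) (by omega) (by omega)
              (by omega), mul_zero]
        · rw [if_neg (by omega), if_neg (by omega)]
          simp only [mul_zero]
          symm
          refine Finset.sum_eq_zero fun m hm => ?_
          simp only [Finset.mem_Icc] at hm
          rw [yB_apply_zero l m i j (by omega) (by omega) (by omega) (by omega) (by omega)
            (by omega), mul_zero]
end
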